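/- arXiv:1207.5616 — 3 statements merged into one kernel-verified Lean document; each statement's English description precedes it below -/
import Mathlib

section
/- Alexander's trick: let n ≥ 1 and let h be a homeomorphism of the unit sphere S^{n-1} = {x ∈ ℝⁿ : ‖x‖ = 1} onto itself. Then there exists a homeomorphism H of the closed unit ball D^n = {x ∈ ℝⁿ : ‖x‖ ≤ 1} onto itself whose restriction to S^{n-1} equals h (explicitly, H(x) = ‖x‖ · h(x/‖x‖) for x ≠ 0 and H(0) = 0 works). -/
/-!
Extend `h` radially: `H x = ‖x‖ • h (x / ‖x‖)` and `H 0 = 0`. This cone extension preserves norms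
and is functorial in `h`, so the extension of `h.symm` inverts it. Away from `0` it is continuous
because `x ↦ (x / ‖x‖, ‖x‖)` is a homeomorphism onto `sphere × (0, ∞)`, and at `0` because it
preserves norms.
-/

open Metric

variable {E : Type*} [NormedAddCommGroup E] [NormedSpace ℝ E]

open Classical in
noncomputable def coneExtension (φ : sphere (0 : E) 1 → sphere (0 : E) 1) (x : E) : E :=
  if hx : x = 0 then 0 else ‖x‖ • (φ (homeomorphUnitSphereProd E ⟨x, hx⟩).1 : E)

section coneExtension

variable (φ ψ : sphere (0 : E) 1 → sphere (0 : E) 1)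

@[simp]
lemma coneExtension_zero : coneExtension φ 0 = 0 :=
  dif_pos rfl

lemma coneExtension_of_ne_zero {x : E} (hx : x ≠ 0) :
    coneExtension φ x = ‖x‖ • (φ (homeomorphUnitSphereProd E ⟨x, hx⟩).1 : E) :=
  dif_neg hx

@[simp]
lemma norm_coneExtension (x : E) : ‖coneExtension φ x‖ = ‖x‖ := by
  by_cases hx : x = 0
  · simp [hx]
  · rw [coneExtension_of_ne_zero φ hx, norm_smul, norm_norm, norm_eq_of_mem_sphere, mul_one]

lemma coneExtension_of_mem_sphere {x : E} (hx : x ∈ sphere (0 : E) 1) :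
    coneExtension φ x = φ ⟨x, hx⟩ := by
  have hx₁ : ‖x‖ = 1 := mem_sphere_zero_iff_norm.1 hx
  rw [coneExtension_of_ne_zero φ (ne_zero_of_mem_unit_sphere ⟨x, hx⟩), hx₁, one_smul]
  congr 3
  ext
  simp [hx₁]

lemma coneExtension_comp (x : E) :
    coneExtension φ (coneExtension ψ x) = coneExtension (φ ∘ ψ) x := by
  by_cases hx : x = 0
  · simp [hx]
  have hψx : coneExtension ψ x ≠ 0 := norm_ne_zero_iff.1 <| by simpa using hx
  rw [coneExtension_of_ne_zero φ hψx, coneExtension_of_ne_zero (φ ∘ ψ) hx]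
  congr 1
  · exact norm_coneExtension ψ x
  congr 2
  ext
  simp only [homeomorphUnitSphereProd_apply_fst_coe, norm_coneExtension]
  rw [coneExtension_of_ne_zero ψ hx, smul_smul, inv_mul_cancel₀ (norm_ne_zero_iff.2 hx), one_smul]

lemma coneExtension_id : coneExtension (id : sphere (0 : E) 1 → sphere (0 : E) 1) = id := by
  ext x
  by_cases hx : x = 0
  · simp [hx]
  · simp [coneExtension_of_ne_zero _ hx, smul_smul, hx]

lemma continuousAt_coneExtension_zero : ContinuousAt (coneExtension φ) 0 := by
  rw [ContinuousAt, coneExtension_zero, tendsto_zero_iff_norm_tendsto_zero]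
  simpa using (continuous_norm (E := E)).tendsto 0

lemma continuousOn_coneExtension_compl_zero (hφ : Continuous φ) :
    ContinuousOn (coneExtension φ) {0}ᶜ := by
  rw [continuousOn_iff_continuous_domRestrict]
  have : Continuous fun y : ({0}ᶜ : Set E) =>
      ‖(y : E)‖ • (φ (homeomorphUnitSphereProd E y).1 : E) := by
    fun_prop
  exact this.congr fun y => (coneExtension_of_ne_zero φ y.2).symm

lemma continuous_coneExtension (hφ : Continuous φ) : Continuous (coneExtension φ) := by
  refine continuous_iff_continuousAt.2 fun x => ?_
  rcases eq_or_ne x 0 with rfl | hx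
  · exact continuousAt_coneExtension_zero φ
  · exact (continuousOn_coneExtension_compl_zero φ hφ).continuousAt
      (isOpen_compl_singleton.mem_nhds hx)

end coneExtension

noncomputable def Homeomorph.coneExtension (h : sphere (0 : E) 1 ≃ₜ sphere (0 : E) 1) :
    E ≃ₜ E where
  toFun := _root_.coneExtension h
  invFun := _root_.coneExtension h.symm
  left_inv x := by
    rw [coneExtension_comp, h.symm_comp_self, coneExtension_id, id]
  right_inv x := by
    rw [coneExtension_comp, h.self_comp_symm, coneExtension_id, id]
  continuous_toFun := continuous_coneExtension _ h.continuous
  continuous_invFun := continuous_coneExtension _ h.symm.continuous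

theorem alexander_trick_general
    (n : ℕ)
    (h : Metric.sphere (0 : EuclideanSpace ℝ (Fin n)) 1 ≃ₜ
         Metric.sphere (0 : EuclideanSpace ℝ (Fin n)) 1) :
    ∃ H : Metric.closedBall (0 : EuclideanSpace ℝ (Fin n)) 1 ≃ₜ
          Metric.closedBall (0 : EuclideanSpace ℝ (Fin n)) 1,
      ∀ (x : EuclideanSpace ℝ (Fin n)) (hx : x ∈ Metric.sphere (0 : EuclideanSpace ℝ (Fin n)) 1),
        (H ⟨x, Metric.sphere_subset_closedBall hx⟩ : EuclideanSpace ℝ (Fin n))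
          = (h ⟨x, hx⟩ : EuclideanSpace ℝ (Fin n)) := by
  refine ⟨(Homeomorph.coneExtension h).sets ?_, fun x hx => coneExtension_of_mem_sphere h hx⟩
  ext x
  simp [Homeomorph.coneExtension]

/-- Alexander's trick: every homeomorphism of the unit sphere extends to a
homeomorphism of the closed unit ball. -/
theorem alexander_trick
    (n : ℕ) (hn : 1 ≤ n)
    (h : Metric.sphere (0 : EuclideanSpace ℝ (Fin n)) 1 ≃ₜ
         Metric.sphere (0 : EuclideanSpace ℝ (Fin n)) 1) :
    ∃ H : Metric.closedBall (0 : EuclideanSpace ℝ (Fin n)) 1 ≃ₜ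
          Metric.closedBall (0 : EuclideanSpace ℝ (Fin n)) 1,
      ∀ (x : EuclideanSpace ℝ (Fin n)) (hx : x ∈ Metric.sphere (0 : EuclideanSpace ℝ (Fin n)) 1),
        (H ⟨x, Metric.sphere_subset_closedBall hx⟩ : EuclideanSpace ℝ (Fin n))
          = (h ⟨x, hx⟩ : EuclideanSpace ℝ (Fin n)) :=
  alexander_trick_general n h
end

section
/- Let n ≥ 1 and let M be a compact Hausdorff topological space. Suppose B₁ and B₂ are closed subsets of M with B₁ ∪ B₂ = M, and suppose there are homeomorphisms h₁ : B₁ → D^n and h₂ : B₂ → D^n onto the closed unit ball D^n = {x ∈ ℝⁿ : ‖x‖ ≤ 1} such that B₁ ∩ B₂ = h₁⁻¹(S^{n-1}) = h₂⁻¹(S^{n-1}), where S^{n-1} = {x ∈ ℝⁿ : ‖x‖ = 1}. Then M is homeomorphic to the unit sphere Sⁿ = {x ∈ ℝ^{n+1} : ‖x‖ = 1}. -/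
/-!
Let `φ = h₁ ∘ h₂⁻¹` on the boundary sphere. Coning `φ` off radially (Alexander's trick) extends it
to a homeomorphism of the ball, and composing `h₂` with that extension gives a chart of `B₂` which
agrees with `h₁` on `B₁ ∩ B₂`. Then `h₁` maps `B₁` onto the upper closed hemisphere of the unit
sphere of `ℝⁿ × ℝ`, viewed as a graph over the ball, and the new chart maps `B₂` onto the lower
one; the two maps agree on the equator, so by the pasting lemma, applied in both directions, they
glue to a homeomorphism.
-/

open Metric Set Function

section Glue

variable {X Y : Type*} {A B : Set X}

open Classical in
noncomputable def piecewiseCover (hAB : A ∪ B = univ) (f : A → Y) (g : B → Y) (x : X) : Y :=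
  if h : x ∈ A then f ⟨x, h⟩ else g ⟨x, (hAB ▸ mem_univ x : x ∈ A ∪ B).resolve_left h⟩

variable (hAB : A ∪ B = univ) {f : A → Y} {g : B → Y}

theorem piecewiseCover_of_mem_left {x : X} (hx : x ∈ A) :
    piecewiseCover hAB f g x = f ⟨x, hx⟩ :=
  dif_pos hx

theorem piecewiseCover_of_mem_right (hfg : ∀ x (ha : x ∈ A) (hb : x ∈ B), f ⟨x, ha⟩ = g ⟨x, hb⟩)
    {x : X} (hx : x ∈ B) : piecewiseCover hAB f g x = g ⟨x, hx⟩ := by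
  by_cases ha : x ∈ A
  · rw [piecewiseCover_of_mem_left hAB ha, hfg x ha hx]
  · exact dif_neg ha

theorem continuous_piecewiseCover [TopologicalSpace X] [TopologicalSpace Y] (hA : IsClosed A)
    (hB : IsClosed B) (hf : Continuous f) (hg : Continuous g)
    (hfg : ∀ x (ha : x ∈ A) (hb : x ∈ B), f ⟨x, ha⟩ = g ⟨x, hb⟩) :
    Continuous (piecewiseCover hAB f g) := by
  rw [← continuousOn_univ, ← hAB]
  refine .union_of_isClosed ?_ ?_ hA hB <;> rw [continuousOn_iff_continuous_domRestrict]
  · convert hf using 1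
    ext x
    exact piecewiseCover_of_mem_left hAB x.2
  · convert hg using 1
    ext x
    exact piecewiseCover_of_mem_right hAB hfg x.2

variable {C D : Set Y} (hCD : C ∪ D = univ)

theorem leftInverse_piecewiseCover (e₁ : A ≃ C) (e₂ : B ≃ D)
    (he : ∀ x (ha : x ∈ A) (hb : x ∈ B), (e₁ ⟨x, ha⟩ : Y) = e₂ ⟨x, hb⟩)
    (he' : ∀ y (hc : y ∈ C) (hd : y ∈ D), (e₁.symm ⟨y, hc⟩ : X) = e₂.symm ⟨y, hd⟩) :
    LeftInverse (piecewiseCover hCD (fun y ↦ (e₁.symm y : X)) fun y ↦ (e₂.symm y : X))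
      (piecewiseCover hAB (fun x ↦ (e₁ x : Y)) fun x ↦ (e₂ x : Y)) := by
  intro x
  rcases (hAB ▸ mem_univ x : x ∈ A ∪ B) with ha | hb
  · rw [piecewiseCover_of_mem_left hAB ha, piecewiseCover_of_mem_left hCD (e₁ _).2]
    simp
  · rw [piecewiseCover_of_mem_right hAB he hb, piecewiseCover_of_mem_right hCD he' (e₂ _).2]
    simp

theorem Equiv.coe_symm_eq_coe_symm_of_agree (e₁ : A ≃ C) (e₂ : B ≃ D)
    (he : ∀ x (ha : x ∈ A) (hb : x ∈ B), (e₁ ⟨x, ha⟩ : Y) = e₂ ⟨x, hb⟩)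
    (hAD : ∀ x (ha : x ∈ A), (e₁ ⟨x, ha⟩ : Y) ∈ D → x ∈ B)
    (y : Y) (hc : y ∈ C) (hd : y ∈ D) : (e₁.symm ⟨y, hc⟩ : X) = e₂.symm ⟨y, hd⟩ := by
  set x := e₁.symm ⟨y, hc⟩
  have hxB : (x : X) ∈ B := hAD x x.2 (by simpa [x] using hd)
  have : e₂ ⟨x, hxB⟩ = ⟨y, hd⟩ := Subtype.ext ((he x x.2 hxB).symm.trans (by simp [x]))
  rw [← this, Equiv.symm_apply_apply]

noncomputable def Homeomorph.glue [TopologicalSpace X] [TopologicalSpace Y] (hA : IsClosed A)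
    (hB : IsClosed B) (hC : IsClosed C) (hD : IsClosed D) (e₁ : A ≃ₜ C) (e₂ : B ≃ₜ D)
    (he : ∀ x (ha : x ∈ A) (hb : x ∈ B), (e₁ ⟨x, ha⟩ : Y) = e₂ ⟨x, hb⟩)
    (hAD : ∀ x (ha : x ∈ A), (e₁ ⟨x, ha⟩ : Y) ∈ D → x ∈ B) : X ≃ₜ Y :=
  have he' := e₁.toEquiv.coe_symm_eq_coe_symm_of_agree e₂.toEquiv he hAD
  { toFun := piecewiseCover hAB (fun x ↦ (e₁ x : Y)) fun x ↦ (e₂ x : Y)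
    invFun := piecewiseCover hCD (fun y ↦ (e₁.symm y : X)) fun y ↦ (e₂.symm y : X)
    left_inv := leftInverse_piecewiseCover hAB hCD e₁.toEquiv e₂.toEquiv he he'
    right_inv := leftInverse_piecewiseCover hCD hAB e₁.symm.toEquiv e₂.symm.toEquiv he' he
    continuous_toFun := continuous_piecewiseCover hAB hA hB (by fun_prop) (by fun_prop) he
    continuous_invFun := continuous_piecewiseCover hCD hC hD (by fun_prop) (by fun_prop) he' }

end Glue

section Radial

variable {E : Type*} [NormedAddCommGroup E] [NormedSpace ℝ E]

theorem inv_norm_smul_mem_unitSphere {v : E} (hv : v ≠ 0) : ‖v‖⁻¹ • v ∈ sphere (0 : E) 1 := by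
  simp [norm_smul, hv]

open Classical in
noncomputable def radialExtension (φ : sphere (0 : E) 1 → sphere (0 : E) 1) (v : E) : E :=
  if hv : v = 0 then 0 else ‖v‖ • (φ ⟨‖v‖⁻¹ • v, inv_norm_smul_mem_unitSphere hv⟩ : E)

variable (φ : sphere (0 : E) 1 → sphere (0 : E) 1)

theorem radialExtension_eq_smul {v : E} (hv : v ≠ 0) :
    radialExtension φ v = ‖v‖ • (φ ⟨‖v‖⁻¹ • v, inv_norm_smul_mem_unitSphere hv⟩ : E) :=
  dif_neg hv

theorem radialExtension_smul {r : ℝ} (hr : 0 < r) (s : sphere (0 : E) 1) :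
    radialExtension φ (r • (s : E)) = r • (φ s : E) := by
  have hs : ‖(s : E)‖ = 1 := mem_sphere_zero_iff_norm.1 s.2
  have hrs : r • (s : E) ≠ 0 := smul_ne_zero hr.ne' (by rintro h; simp [h] at hs)
  have hnorm : ‖r • (s : E)‖ = r := by rw [norm_smul, hs, mul_one, Real.norm_of_nonneg hr.le]
  have hunit : (⟨‖r • (s : E)‖⁻¹ • r • (s : E), inv_norm_smul_mem_unitSphere hrs⟩ :
      sphere (0 : E) 1) = s := Subtype.ext (by simp [hnorm, smul_smul, hr.ne'])
  rw [radialExtension_eq_smul φ hrs, hunit, hnorm]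

theorem norm_radialExtension (v : E) : ‖radialExtension φ v‖ = ‖v‖ := by
  by_cases hv : v = 0
  · simp [radialExtension, hv]
  · rw [radialExtension_eq_smul φ hv, norm_smul, norm_norm, mem_sphere_zero_iff_norm.1 (φ _).2,
      mul_one]

theorem radialExtension_of_mem_sphere (s : sphere (0 : E) 1) :
    radialExtension φ s = φ s := by
  simpa using radialExtension_smul φ one_pos s

theorem radialExtension_leftInverse {ψ : sphere (0 : E) 1 → sphere (0 : E) 1}
    (hψφ : LeftInverse ψ φ) : LeftInverse (radialExtension ψ) (radialExtension φ) := by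
  intro v
  by_cases hv : v = 0
  · simp [radialExtension, hv]
  · rw [radialExtension_eq_smul φ hv, radialExtension_smul ψ (norm_pos_iff.2 hv), hψφ]
    simp [smul_smul, hv]

theorem continuous_radialExtension (hφ : Continuous φ) : Continuous (radialExtension φ) := by
  rw [continuous_iff_continuousAt]
  intro v
  by_cases hv : v = 0
  · subst hv
    have h0 : radialExtension φ 0 = 0 := dif_pos rfl
    rw [ContinuousAt, h0, tendsto_zero_iff_norm_tendsto_zero]
    simp only [norm_radialExtension]
    exact continuous_norm.tendsto' 0 0 norm_zero
  · refine ContinuousOn.continuousAt (s := {0}ᶜ) ?_ (isOpen_compl_singleton.mem_nhds hv)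
    rw [continuousOn_iff_continuous_domRestrict]
    have : ({0}ᶜ : Set E).domRestrict (radialExtension φ) =
        fun v : ({0}ᶜ : Set E) ↦ ‖(v : E)‖ • (φ (homeomorphUnitSphereProd E v).1 : E) := by
      ext1 v
      rw [domRestrict_apply, radialExtension_eq_smul φ v.2]
      congr 3
      ext1
      simp
    rw [this]
    fun_prop

noncomputable def Homeomorph.radialExtension (φ : sphere (0 : E) 1 ≃ₜ sphere (0 : E) 1) :
    E ≃ₜ E where
  toFun := _root_.radialExtension φ
  invFun := _root_.radialExtension φ.symm
  left_inv := radialExtension_leftInverse φ φ.symm_apply_apply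
  right_inv := radialExtension_leftInverse φ.symm φ.apply_symm_apply
  continuous_toFun := continuous_radialExtension φ φ.continuous
  continuous_invFun := continuous_radialExtension φ.symm φ.symm.continuous

end Radial

theorem Set.mem_iff_of_inter_eq_image {X : Type*} {s t : Set X} {P : s → Prop}
    (h : s ∩ t = Subtype.val '' {x | P x}) (x : s) : (x : X) ∈ t ↔ P x := by
  rw [show P x ↔ x ∈ {x | P x} from .rfl, ← Subtype.val_injective.mem_set_image, ← h]
  exact (and_iff_right x.2).symm

section BoundaryTransition

variable {X E : Type*} [TopologicalSpace X] [NormedAddCommGroup E]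
  {B₁ B₂ : Set X} (h₁ : B₁ ≃ₜ closedBall (0 : E) 1) (h₂ : B₂ ≃ₜ closedBall (0 : E) 1)
  (hb₁ : ∀ x : B₁, (x : X) ∈ B₂ ↔ (h₁ x : E) ∈ sphere (0 : E) 1)
  (hb₂ : ∀ x : B₂, (x : X) ∈ B₁ ↔ (h₂ x : E) ∈ sphere (0 : E) 1)

noncomputable def boundaryTransition : C(sphere (0 : E) 1, sphere (0 : E) 1) where
  toFun s := ⟨h₁ ⟨h₂.symm ⟨s, sphere_subset_closedBall s.2⟩, (hb₂ _).2 (by simp)⟩,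
    (hb₁ _).1 (h₂.symm _).2⟩
  continuous_toFun := by fun_prop

theorem boundaryTransition_apply {x : X} (hx₁ : x ∈ B₁) (hx₂ : x ∈ B₂) :
    boundaryTransition h₁ h₂ hb₁ hb₂ ⟨h₂ ⟨x, hx₂⟩, (hb₂ _).1 hx₁⟩ =
      ⟨h₁ ⟨x, hx₁⟩, (hb₁ _).1 hx₂⟩ := by
  simp [boundaryTransition]

theorem boundaryTransition_leftInverse :
    LeftInverse (boundaryTransition h₂ h₁ hb₂ hb₁) (boundaryTransition h₁ h₂ hb₁ hb₂) := by
  intro s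
  simp [boundaryTransition]

noncomputable def boundaryTransitionHomeomorph : sphere (0 : E) 1 ≃ₜ sphere (0 : E) 1 where
  toFun := boundaryTransition h₁ h₂ hb₁ hb₂
  invFun := boundaryTransition h₂ h₁ hb₂ hb₁
  left_inv := boundaryTransition_leftInverse h₁ h₂ hb₁ hb₂
  right_inv := boundaryTransition_leftInverse h₂ h₁ hb₂ hb₁

/-- Alexander's trick. -/
noncomputable def alexanderChart [NormedSpace ℝ E] : B₂ ≃ₜ closedBall (0 : E) 1 :=
  h₂.trans <| (Homeomorph.radialExtension (boundaryTransitionHomeomorph h₁ h₂ hb₁ hb₂)).subtype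
    fun v ↦ by simp [Homeomorph.radialExtension, norm_radialExtension]

theorem alexanderChart_apply [NormedSpace ℝ E] {x : X} (hx₁ : x ∈ B₁) (hx₂ : x ∈ B₂) :
    (alexanderChart h₁ h₂ hb₁ hb₂ ⟨x, hx₂⟩ : E) = h₁ ⟨x, hx₁⟩ := by
  have := radialExtension_of_mem_sphere (boundaryTransition h₁ h₂ hb₁ hb₂)
    ⟨_, (hb₂ ⟨x, hx₂⟩).1 hx₁⟩
  rw [boundaryTransition_apply] at this
  exact this

end BoundaryTransition

section Hemisphere

variable {E : Type*} [NormedAddCommGroup E]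

local notation "S" => sphere (0 : WithLp 2 (E × ℝ)) 1

def hemisphere (ε : ℝ) : Set S := {p | 0 ≤ ε * (p : WithLp 2 (E × ℝ)).snd}

theorem isClosed_hemisphere (ε : ℝ) : IsClosed (hemisphere (E := E) ε) :=
  isClosed_le continuous_const (by fun_prop)

theorem hemisphere_union_hemisphere_neg : hemisphere (E := E) 1 ∪ hemisphere (-1) = univ := by
  ext p
  simp only [hemisphere, mem_union, mem_ofPred_eq, one_mul, neg_one_mul, neg_nonneg, mem_univ,
    iff_true]
  exact le_total _ _

theorem norm_fst_sq_add_snd_sq {p : WithLp 2 (E × ℝ)} (hp : p ∈ S) :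
    ‖p.fst‖ ^ 2 + p.snd ^ 2 = 1 := by
  simpa [mem_sphere_zero_iff_norm.1 hp] using (WithLp.prod_norm_sq_eq_of_L2 p).symm

theorem norm_fst_eq_one_of_mem_hemisphere {p : S} (hp₁ : p ∈ hemisphere 1)
    (hp₂ : p ∈ hemisphere (-1)) : ‖(p : WithLp 2 (E × ℝ)).fst‖ = 1 := by
  have hsnd : (p : WithLp 2 (E × ℝ)).snd = 0 := by
    simp only [hemisphere, mem_ofPred_eq] at hp₁ hp₂
    linarith
  have := norm_fst_sq_add_snd_sq p.2
  rw [hsnd, zero_pow two_ne_zero, add_zero] at this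
  exact (pow_eq_one_iff_of_nonneg (norm_nonneg _) two_ne_zero).1 this

theorem toLp_mem_unitSphere {ε : ℝ} (hε : ε ^ 2 = 1) {y : E} (hy : ‖y‖ ≤ 1) :
    WithLp.toLp 2 (y, ε * √(1 - ‖y‖ ^ 2)) ∈ S := by
  have : 0 ≤ 1 - ‖y‖ ^ 2 := by nlinarith [norm_nonneg y]
  rw [mem_sphere_zero_iff_norm, WithLp.prod_norm_eq_of_L2]
  simp [mul_pow, hε, Real.sq_sqrt this]

noncomputable def closedBallHomeomorphHemisphere (ε : ℝ) (hε : ε ^ 2 = 1) :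
    closedBall (0 : E) 1 ≃ₜ hemisphere (E := E) ε where
  toFun y := ⟨⟨WithLp.toLp 2 (y, ε * √(1 - ‖(y : E)‖ ^ 2)),
    toLp_mem_unitSphere hε (mem_closedBall_zero_iff.1 y.2)⟩, by
      simp [hemisphere, ← mul_assoc, ← sq, hε, Real.sqrt_nonneg]⟩
  invFun p := ⟨(p : WithLp 2 (E × ℝ)).fst, by
    have := norm_fst_sq_add_snd_sq p.1.2
    rw [mem_closedBall_zero_iff]
    nlinarith [norm_nonneg (p : WithLp 2 (E × ℝ)).fst, sq_nonneg (p : WithLp 2 (E × ℝ)).snd]⟩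
  left_inv y := rfl
  right_inv p := by
    obtain ⟨⟨p, hp⟩, hpε⟩ := p
    have h1 : 1 - ‖p.fst‖ ^ 2 = (ε * p.snd) ^ 2 := by
      rw [mul_pow, hε]; linarith [norm_fst_sq_add_snd_sq hp]
    have h2 : ε * (ε * p.snd) = p.snd := by rw [← mul_assoc, ← sq, hε, one_mul]
    ext : 2
    simp only [h1, Real.sqrt_sq hpε, h2]
    rfl
  continuous_toFun := by fun_prop
  continuous_invFun := by fun_prop

theorem coe_closedBallHomeomorphHemisphere_of_norm_eq_one {ε : ℝ} (hε : ε ^ 2 = 1)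
    {y : closedBall (0 : E) 1} (hy : ‖(y : E)‖ = 1) :
    ((closedBallHomeomorphHemisphere ε hε y : S) : WithLp 2 (E × ℝ)) =
      WithLp.toLp 2 ((y : E), 0) := by
  change WithLp.toLp 2 ((y : E), ε * √(1 - ‖(y : E)‖ ^ 2)) = _
  simp [hy]

variable {X : Type*} [TopologicalSpace X] {B₁ B₂ : Set X}

noncomputable def homeomorphSphereOfAgreeingCharts (hB₁ : IsClosed B₁) (hB₂ : IsClosed B₂)
    (hcover : B₁ ∪ B₂ = univ) (h₁ : B₁ ≃ₜ closedBall (0 : E) 1) (h₂ : B₂ ≃ₜ closedBall (0 : E) 1)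
    (hb₁ : ∀ x : B₁, (x : X) ∈ B₂ ↔ (h₁ x : E) ∈ sphere (0 : E) 1)
    (hagree : ∀ x (hx₁ : x ∈ B₁) (hx₂ : x ∈ B₂), (h₁ ⟨x, hx₁⟩ : E) = h₂ ⟨x, hx₂⟩) : X ≃ₜ S :=
  Homeomorph.glue hcover hemisphere_union_hemisphere_neg hB₁ hB₂ (isClosed_hemisphere 1)
    (isClosed_hemisphere (-1)) (h₁.trans (closedBallHomeomorphHemisphere 1 (one_pow 2)))
    (h₂.trans (closedBallHomeomorphHemisphere (-1) neg_one_sq))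
    (fun x hx₁ hx₂ ↦ by
      have hy : ‖(h₁ ⟨x, hx₁⟩ : E)‖ = 1 := mem_sphere_zero_iff_norm.1 ((hb₁ _).1 hx₂)
      ext1
      simp only [Homeomorph.trans_apply]
      rw [coe_closedBallHomeomorphHemisphere_of_norm_eq_one _ hy,
        coe_closedBallHomeomorphHemisphere_of_norm_eq_one _ (hagree x hx₁ hx₂ ▸ hy), hagree])
    (fun x hx₁ hx₂ ↦ (hb₁ ⟨x, hx₁⟩).2 <| mem_sphere_zero_iff_norm.2 <|
      norm_fst_eq_one_of_mem_hemisphere (Subtype.prop _) hx₂)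

end Hemisphere

noncomputable def LinearIsometryEquiv.unitSphereHomeomorph {F F' : Type*} [NormedAddCommGroup F]
    [NormedAddCommGroup F'] [NormedSpace ℝ F] [NormedSpace ℝ F'] (e : F ≃ₗᵢ[ℝ] F') :
    sphere (0 : F) 1 ≃ₜ sphere (0 : F') 1 :=
  e.toHomeomorph.subtype fun x ↦ by simp

theorem finrank_withLp_euclideanSpace_prod_real (n : ℕ) :
    Module.finrank ℝ (WithLp 2 (EuclideanSpace ℝ (Fin n) × ℝ)) = n + 1 := by
  simp [(WithLp.linearEquiv 2 ℝ (EuclideanSpace ℝ (Fin n) × ℝ)).finrank_eq]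

theorem union_of_two_balls_is_sphere_general
    (n : ℕ)
    (M : Type*) [TopologicalSpace M]
    (B₁ B₂ : Set M) (hB₁ : IsClosed B₁) (hB₂ : IsClosed B₂)
    (hcover : B₁ ∪ B₂ = Set.univ)
    (h₁ : B₁ ≃ₜ Metric.closedBall (0 : EuclideanSpace ℝ (Fin n)) 1)
    (h₂ : B₂ ≃ₜ Metric.closedBall (0 : EuclideanSpace ℝ (Fin n)) 1)
    (hbd₁ : B₁ ∩ B₂ = Subtype.val ''
      {x : B₁ | (h₁ x : EuclideanSpace ℝ (Fin n)) ∈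
        Metric.sphere (0 : EuclideanSpace ℝ (Fin n)) 1})
    (hbd₂ : B₁ ∩ B₂ = Subtype.val ''
      {x : B₂ | (h₂ x : EuclideanSpace ℝ (Fin n)) ∈
        Metric.sphere (0 : EuclideanSpace ℝ (Fin n)) 1}) :
    Nonempty (M ≃ₜ Metric.sphere (0 : EuclideanSpace ℝ (Fin (n + 1))) 1) := by
  have hb₁ := mem_iff_of_inter_eq_image hbd₁
  have hb₂ := mem_iff_of_inter_eq_image ((inter_comm B₂ B₁).trans hbd₂)
  have hagree (x : M) (hx₁ : x ∈ B₁) (hx₂ : x ∈ B₂) :=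
    (alexanderChart_apply h₁ h₂ hb₁ hb₂ hx₁ hx₂).symm
  let e : WithLp 2 (EuclideanSpace ℝ (Fin n) × ℝ) ≃ₗᵢ[ℝ] EuclideanSpace ℝ (Fin (n + 1)) :=
    ((stdOrthonormalBasis ℝ _).reindex
      (finCongr (finrank_withLp_euclideanSpace_prod_real n))).repr
  exact ⟨(homeomorphSphereOfAgreeingCharts hB₁ hB₂ hcover h₁ _ hb₁ hagree).trans
    e.unitSphereHomeomorph⟩

/-- A compact Hausdorff space that is the union of two closed subsets, each homeomorphic
to the closed unit ball and meeting exactly along the preimages of the boundary sphere,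
is homeomorphic to a sphere. -/
theorem union_of_two_balls_is_sphere
    (n : ℕ) (hn : 1 ≤ n)
    (M : Type*) [TopologicalSpace M] [CompactSpace M] [T2Space M]
    (B₁ B₂ : Set M) (hB₁ : IsClosed B₁) (hB₂ : IsClosed B₂)
    (hcover : B₁ ∪ B₂ = Set.univ)
    (h₁ : B₁ ≃ₜ Metric.closedBall (0 : EuclideanSpace ℝ (Fin n)) 1)
    (h₂ : B₂ ≃ₜ Metric.closedBall (0 : EuclideanSpace ℝ (Fin n)) 1)
    (hbd₁ : B₁ ∩ B₂ = Subtype.val ''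
      {x : B₁ | (h₁ x : EuclideanSpace ℝ (Fin n)) ∈
        Metric.sphere (0 : EuclideanSpace ℝ (Fin n)) 1})
    (hbd₂ : B₁ ∩ B₂ = Subtype.val ''
      {x : B₂ | (h₂ x : EuclideanSpace ℝ (Fin n)) ∈
        Metric.sphere (0 : EuclideanSpace ℝ (Fin n)) 1}) :
    Nonempty (M ≃ₜ Metric.sphere (0 : EuclideanSpace ℝ (Fin (n + 1))) 1) :=
  union_of_two_balls_is_sphere_general n M B₁ B₂ hB₁ hB₂ hcover h₁ h₂ hbd₁ hbd₂
end

section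
/- Complexification of a real analytic function: let f : ℝⁿ → ℝ be analytic at a point x ∈ ℝⁿ. Then there exist an open set U ⊆ ℂⁿ containing ι(x) and a function F : ℂⁿ → ℂ which is complex analytic (holomorphic) at every point of U, such that F(ι(y)) = f(y) for every y ∈ ℝⁿ with ι(y) ∈ U, where ι : ℝⁿ → ℂⁿ is the coordinatewise inclusion sending (y₁,…,yₙ) to (y₁+0i,…,yₙ+0i). -/
/-!
Expanding the `m`-th term of the real power series `p` of `f` at `x` in the standard basis writes
it as a real form `∑ⱼ p_m(e_{j₁}, …, e_{jₘ}) y_{j₁} ⋯ y_{jₘ}`; the same coefficients define a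
complex series whose `m`-th term has norm at most `nᵐ ‖p_m‖`, so it still converges near `x`,
and on real points its terms are those of `p`.
-/

open scoped NNReal ENNReal

lemma MultilinearMap.apply_eq_sum_prod_smul_single {R M κ ι : Type*} [CommSemiring R]
    [AddCommMonoid M] [Module R M] [Fintype κ] [DecidableEq κ] [Fintype ι] [DecidableEq ι]
    (f : MultilinearMap R (fun _ : κ => ι → R) M) (v : κ → ι → R) :
    f v = ∑ j : κ → ι, (∏ k, v k (j k)) • f fun k => Pi.single (j k) 1 := by
  conv_lhs => rw [funext fun k => pi_eq_sum_univ' (v k), f.map_sum]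
  exact Finset.sum_congr rfl fun j _ => f.map_smul_univ _ _

namespace ContinuousMultilinearMap

variable {ι : Type*} {m : ℕ}

noncomputable def prodProj (j : Fin m → ι) :
    ContinuousMultilinearMap ℂ (fun _ : Fin m => ι → ℂ) ℂ :=
  (ContinuousMultilinearMap.mkPiAlgebra ℂ (Fin m) ℂ).compContinuousLinearMap
    fun k => ContinuousLinearMap.proj (j k)

@[simp]
lemma prodProj_apply (j : Fin m → ι) (w : Fin m → ι → ℂ) : prodProj j w = ∏ k, w k (j k) := by
  simp [prodProj]

lemma norm_prodProj_le [Fintype ι] (j : Fin m → ι) : ‖prodProj j‖ ≤ 1 := by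
  refine opNorm_le_bound zero_le_one fun w => ?_
  rw [prodProj_apply, one_mul, norm_prod]
  exact Finset.prod_le_prod (fun _ _ => norm_nonneg _) fun k _ => norm_le_pi_norm (w k) (j k)

end ContinuousMultilinearMap

namespace FormalMultilinearSeries

open ContinuousMultilinearMap

lemma radius_pos_of_norm_le_pow_mul {𝕜 𝕜' E E' F F' : Type*}
    [NontriviallyNormedField 𝕜] [NormedAddCommGroup E] [NormedSpace 𝕜 E]
    [NormedAddCommGroup F] [NormedSpace 𝕜 F]
    [NontriviallyNormedField 𝕜'] [NormedAddCommGroup E'] [NormedSpace 𝕜' E']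
    [NormedAddCommGroup F'] [NormedSpace 𝕜' F']
    {p : FormalMultilinearSeries 𝕜 E F} {q : FormalMultilinearSeries 𝕜' E' F'} {C : ℝ≥0}
    (h : ∀ n, ‖q n‖ ≤ C ^ n * ‖p n‖) (hp : 0 < p.radius) : 0 < q.radius := by
  obtain ⟨r, hr0, hr⟩ := ENNReal.lt_iff_exists_nnreal_btwn.1 hp
  obtain ⟨K, -, hK⟩ := p.norm_mul_pow_le_of_lt_radius hr
  refine lt_of_lt_of_le ?_ (q.le_radius_of_bound K (r := r / (C + 1)) fun n => ?_)
  · exact ENNReal.coe_pos.2 (div_pos (ENNReal.coe_pos.1 hr0) (by positivity))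
  calc ‖q n‖ * ((r / (C + 1) : ℝ≥0) : ℝ) ^ n
      ≤ C ^ n * ‖p n‖ * ((r / (C + 1) : ℝ≥0) : ℝ) ^ n := by gcongr; exact h n
    _ = ‖p n‖ * r ^ n * ((C : ℝ) / (C + 1)) ^ n := by
        push_cast; rw [div_pow]; ring
    _ ≤ ‖p n‖ * r ^ n * 1 := by
        gcongr
        exact pow_le_one₀ (by positivity) ((div_le_one (by positivity)).2 (by linarith))
    _ ≤ K := by rw [mul_one]; exact hK n

variable {ι : Type*} [Fintype ι] [DecidableEq ι]

noncomputable def complexify (p : FormalMultilinearSeries ℝ (ι → ℝ) ℝ) :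
    FormalMultilinearSeries ℂ (ι → ℂ) ℂ :=
  fun m => ∑ j : Fin m → ι, ((p m fun k => Pi.single (j k) 1 : ℝ) : ℂ) • prodProj j

variable (p : FormalMultilinearSeries ℝ (ι → ℝ) ℝ)

lemma complexify_apply_ofReal (m : ℕ) (v : Fin m → ι → ℝ) :
    p.complexify m (fun k i => (v k i : ℂ)) = p m v := by
  rw [← (p m).coe_coe, MultilinearMap.apply_eq_sum_prod_smul_single]
  simp [complexify, mul_comm]

lemma norm_complexify_le (m : ℕ) : ‖p.complexify m‖ ≤ Fintype.card ι ^ m * ‖p m‖ := by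
  refine (norm_sum_le _ _).trans ?_
  calc ∑ j : Fin m → ι, ‖((p m fun k => Pi.single (j k) 1 : ℝ) : ℂ) • prodProj j‖
      ≤ ∑ _j : Fin m → ι, ‖p m‖ := Finset.sum_le_sum fun j _ => by
        rw [norm_smul, Complex.norm_real]
        refine (mul_le_of_le_one_right (norm_nonneg _) (norm_prodProj_le j)).trans
          ((p m).unit_le_opNorm ((pi_norm_le_iff_of_nonneg zero_le_one).2 fun k => ?_))
        rw [Pi.norm_single, norm_one]
    _ = Fintype.card ι ^ m * ‖p m‖ := by simp

lemma radius_complexify_pos (hp : 0 < p.radius) : 0 < p.complexify.radius :=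
  radius_pos_of_norm_le_pow_mul (C := Fintype.card ι) (by simpa using p.norm_complexify_le) hp

end FormalMultilinearSeries

lemma HasFPowerSeriesOnBall.complexify_sum_ofReal {ι : Type*} [Fintype ι] [DecidableEq ι]
    {f : (ι → ℝ) → ℝ} {p : FormalMultilinearSeries ℝ (ι → ℝ) ℝ} {x : ι → ℝ} {r : ℝ≥0∞}
    (hf : HasFPowerSeriesOnBall f p x r) {y : ι → ℝ} (hy : y ∈ Metric.eball 0 r) :
    p.complexify.sum (fun i => (y i : ℂ)) = f (x + y) := by
  have h := (Complex.ofRealCLM.hasSum (hf.hasSum hy)).tsum_eq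
  rw [Complex.ofRealCLM_apply] at h
  rw [FormalMultilinearSeries.sum, ← h]
  exact tsum_congr fun m => p.complexify_apply_ofReal m fun _ => y

/-- Complexification of a real analytic function: a function `f : ℝⁿ → ℝ` analytic at a
point extends to a holomorphic function on a neighborhood of that point in `ℂⁿ`. -/
theorem complexification_of_real_analytic
    (n : ℕ) (f : (Fin n → ℝ) → ℝ) (x : Fin n → ℝ)
    (hf : AnalyticAt ℝ f x) :
    ∃ (U : Set (Fin n → ℂ)) (F : (Fin n → ℂ) → ℂ),
      IsOpen U ∧
      (fun i => (x i : ℂ)) ∈ U ∧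
      AnalyticOnNhd ℂ F U ∧
      ∀ y : Fin n → ℝ, (fun i => (y i : ℂ)) ∈ U →
        F (fun i => (y i : ℂ)) = (f y : ℂ) := by
  obtain ⟨p, r, hp⟩ := hf
  have hradius : 0 < p.complexify.radius := p.radius_complexify_pos hp.radius_pos
  set c : Fin n → ℂ := fun i => (x i : ℂ)
  refine ⟨Metric.eball c (min r p.complexify.radius), fun z => p.complexify.sum (z - c),
    Metric.isOpen_eball, Metric.mem_eball_self (lt_min hp.r_pos hradius), ?_, fun y hy => ?_⟩
  · have hsum := (p.complexify.hasFPowerSeriesOnBall hradius).comp_sub c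
    rw [zero_add] at hsum
    exact hsum.analyticOnNhd.mono (Metric.eball_subset_eball (min_le_right _ _))
  · have hι : Isometry fun (y : Fin n → ℝ) i => (y i : ℂ) :=
      Isometry.piMap (fun _ => Complex.ofReal) fun _ => Complex.isometry_ofReal
    have hyx : y - x ∈ Metric.eball 0 r := by
      rw [Metric.mem_eball, edist_zero_right, ← edist_eq_enorm_sub, ← hι.edist_eq]
      exact lt_of_lt_of_le hy (min_le_left _ _)
    have hsub : (fun i => (y i : ℂ)) - c = fun i => ((y - x) i : ℂ) := by
      ext i; simp [c]
    beta_reduce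
    rw [hsub, hp.complexify_sum_ofReal hyx, add_sub_cancel]
end
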